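/- Let α, β, α_cs ≥ 1 be real parameters and let f_{a,b} denote the Beta(a,b) probability density function on (0,1). For a ∈ (0,1) define ξ̃(a,u) = (1/2)(1 − √((1−a)/(1−u))) and ∂_aξ̃(a,u) = 1/(4√((1−a)(1−u))), and define P̃(a) = ∫_{0}^{a} f_{α_cs, α+β}(u)·[f_{α,β}(ξ̃(a,u)) + f_{α,β}(1 − ξ̃(a,u))]·∂_aξ̃(a,u) du (the posterior density of the modified ambiguity in the three-category case). Then there is a constant K > 0 such that P̃(1−ε) ∼ K·ε^{−1/2} as ε → 0⁺; in particular, P̃(a) → +∞ as a → 1⁻. -/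

import Mathlib

/-!
After the substitution `a = 1 - ε`, the factor `√ε` exactly cancels the singular part of
`∂ₐξ̃(1-ε,u) = 1/(4√ε√(1-u))`, so `P̃(1-ε)·√ε` is the integral over `u ∈ (0,1-ε]` of
`f_{α_cs,α+β}(u)·[f_{α,β}(ξ̃) + f_{α,β}(1-ξ̃)] / (4√(1-u))`. Because `α + β ≥ 2`, the factor
`(1-u)^{α+β-1}` of the first density absorbs `1/√(1-u)`, and for `α, β ≥ 1` the Beta densities are
bounded, so the integrand is uniformly bounded. As `ε → 0⁺` we have `ξ̃(1-ε,u) → 1/2`, and dominated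
convergence gives the limit `K = ∫₀¹ f_{α_cs,α+β}(u)·2f_{α,β}(1/2) / (4√(1-u)) du > 0`.
-/

open Filter Topology intervalIntegral

/-- The Beta(a,b) probability density `π^(a-1)(1-π)^(b-1)/B(a,b)` on `(0,1)`,
with `B(a,b) = Γ(a)Γ(b)/Γ(a+b)`. -/
noncomputable def betaPDF (a b : ℝ) (x : ℝ) : ℝ :=
  x ^ (a - 1) * (1 - x) ^ (b - 1) /
    (Real.Gamma a * Real.Gamma b / Real.Gamma (a + b))

/-- `ξ̃(a,u) = ½(1 - √((1-a)/(1-u)))` for the modified ambiguity. -/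
noncomputable def xiMod (a u : ℝ) : ℝ :=
  (1 / 2) * (1 - Real.sqrt ((1 - a) / (1 - u)))

/-- `∂ₐξ̃(a,u) = 1/(4√((1-a)(1-u)))` for the modified ambiguity. -/
noncomputable def dxiMod (a u : ℝ) : ℝ :=
  1 / (4 * Real.sqrt ((1 - a) * (1 - u)))

/-- The posterior density of the modified ambiguity in the three-category case:
`P̃(a) = ∫_0^a f_{α_cs,α+β}(u)·[f_{α,β}(ξ̃) + f_{α,β}(1-ξ̃)]·∂ₐξ̃ du`. -/
noncomputable def ambModPosterior (α β αcs : ℝ) (a : ℝ) : ℝ :=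
  ∫ u in (0 : ℝ)..a,
    betaPDF αcs (α + β) u *
      (betaPDF α β (xiMod a u) + betaPDF α β (1 - xiMod a u)) * dxiMod a u

open MeasureTheory Set

section BetaPDF

variable {a b x : ℝ}

lemma Gamma_mul_Gamma_div_Gamma_add_pos (ha : 0 < a) (hb : 0 < b) :
    0 < Real.Gamma a * Real.Gamma b / Real.Gamma (a + b) := by
  have := Real.Gamma_pos_of_pos ha
  have := Real.Gamma_pos_of_pos hb
  have := Real.Gamma_pos_of_pos (add_pos ha hb)
  positivity

lemma betaPDF_nonneg (ha : 0 < a) (hb : 0 < b) (hx : x ∈ Icc 0 1) : 0 ≤ betaPDF a b x :=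
  div_nonneg (mul_nonneg (Real.rpow_nonneg hx.1 _) (Real.rpow_nonneg (sub_nonneg.2 hx.2) _))
    (Gamma_mul_Gamma_div_Gamma_add_pos ha hb).le

lemma betaPDF_pos (ha : 0 < a) (hb : 0 < b) (hx : x ∈ Ioo 0 1) : 0 < betaPDF a b x :=
  div_pos (mul_pos (Real.rpow_pos_of_pos hx.1 _) (Real.rpow_pos_of_pos (sub_pos.2 hx.2) _))
    (Gamma_mul_Gamma_div_Gamma_add_pos ha hb)

lemma betaPDF_le_rpow_one_sub (ha : 1 ≤ a) (hb : 0 < b) (hx : x ∈ Icc 0 1) :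
    betaPDF a b x ≤ (1 - x) ^ (b - 1) / (Real.Gamma a * Real.Gamma b / Real.Gamma (a + b)) := by
  refine div_le_div_of_nonneg_right ?_ (Gamma_mul_Gamma_div_Gamma_add_pos (by linarith) hb).le
  exact mul_le_of_le_one_left (Real.rpow_nonneg (sub_nonneg.2 hx.2) _)
    (Real.rpow_le_one hx.1 hx.2 (by linarith))

lemma betaPDF_le (ha : 1 ≤ a) (hb : 1 ≤ b) (hx : x ∈ Icc 0 1) :
    betaPDF a b x ≤ (Real.Gamma a * Real.Gamma b / Real.Gamma (a + b))⁻¹ := by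
  have hB := Gamma_mul_Gamma_div_Gamma_add_pos (a := a) (b := b) (by linarith) (by linarith)
  refine (betaPDF_le_rpow_one_sub ha (by linarith) hx).trans ?_
  rw [div_eq_mul_inv]
  exact mul_le_of_le_one_left (inv_nonneg.2 hB.le)
    (Real.rpow_le_one (sub_nonneg.2 hx.2) (by linarith [hx.1]) (by linarith))

lemma betaPDF_le_sqrt_one_sub (ha : 1 ≤ a) (hb : 3 / 2 ≤ b) (hx : x ∈ Icc 0 1) :
    betaPDF a b x ≤ √(1 - x) / (Real.Gamma a * Real.Gamma b / Real.Gamma (a + b)) := by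
  refine (betaPDF_le_rpow_one_sub ha (by linarith) hx).trans ?_
  have := Gamma_mul_Gamma_div_Gamma_add_pos (a := a) (b := b) (by linarith) (by linarith)
  gcongr
  rw [Real.sqrt_eq_rpow]
  exact Real.rpow_le_rpow_of_exponent_ge' (sub_nonneg.2 hx.2) (by linarith [hx.1]) (by norm_num)
    (by linarith)

lemma continuousAt_betaPDF (hx : x ∈ Ioo 0 1) : ContinuousAt (betaPDF a b) x := by
  unfold betaPDF
  exact ((Real.continuousAt_rpow_const _ _ (Or.inl hx.1.ne')).mul
    ((Real.continuousAt_rpow_const _ _ (Or.inl (sub_pos.2 hx.2).ne')).comp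
      (continuous_const.sub continuous_id).continuousAt)).div_const _

@[fun_prop]
lemma measurable_betaPDF : Measurable (betaPDF a b) := by
  unfold betaPDF
  fun_prop

end BetaPDF

section XiMod

variable {ε u : ℝ}

lemma xiMod_one_sub_mem_Icc (hε : 0 ≤ ε) (hu : u ≤ 1 - ε) : xiMod (1 - ε) u ∈ Icc 0 1 := by
  have hratio : (1 - (1 - ε)) / (1 - u) ≤ 1 := div_le_one_of_le₀ (by linarith) (by linarith)
  have hsqrt : √((1 - (1 - ε)) / (1 - u)) ≤ 1 := Real.sqrt_le_one.2 hratio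
  have := Real.sqrt_nonneg ((1 - (1 - ε)) / (1 - u))
  constructor <;> simp only [xiMod] <;> linarith

lemma xiMod_one (u : ℝ) : xiMod 1 u = 1 / 2 := by
  simp [xiMod]

lemma dxiMod_one_sub_mul_sqrt (hε : 0 < ε) (u : ℝ) :
    dxiMod (1 - ε) u * √ε = 1 / (4 * √(1 - u)) := by
  rw [dxiMod, sub_sub_cancel, Real.sqrt_mul hε.le]
  have := Real.sqrt_pos.2 hε
  field_simp

end XiMod

section RescaledIntegrand

variable {α β αcs ε u : ℝ}

noncomputable def rescaledIntegrand (α β αcs ε u : ℝ) : ℝ :=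
  betaPDF αcs (α + β) u * (betaPDF α β (xiMod (1 - ε) u) + betaPDF α β (1 - xiMod (1 - ε) u)) /
    (4 * √(1 - u))

lemma ambModPosterior_one_sub_mul_sqrt (hε : 0 < ε) :
    ambModPosterior α β αcs (1 - ε) * √ε = ∫ u in 0..1 - ε, rescaledIntegrand α β αcs ε u := by
  rw [ambModPosterior, ← intervalIntegral.integral_mul_const]
  congr 1 with u
  rw [mul_assoc, dxiMod_one_sub_mul_sqrt hε, rescaledIntegrand, mul_one_div]

lemma measurable_rescaledIntegrand : Measurable (rescaledIntegrand α β αcs ε) := by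
  unfold rescaledIntegrand xiMod
  fun_prop

lemma continuousAt_rescaledIntegrand_zero :
    ContinuousAt (fun ε => rescaledIntegrand α β αcs ε u) 0 := by
  have hhalf : (1 / 2 : ℝ) ∈ Ioo 0 1 := by norm_num
  have hxi : ContinuousAt (fun ε => xiMod (1 - ε) u) 0 := by unfold xiMod; fun_prop
  have hxi' : xiMod (1 - 0) u = 1 / 2 := by rw [sub_zero, xiMod_one]
  have h₁ : ContinuousAt (fun ε => betaPDF α β (xiMod (1 - ε) u)) 0 :=
    (continuousAt_betaPDF hhalf).comp_of_eq hxi hxi'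
  have h₂ : ContinuousAt (fun ε => betaPDF α β (1 - xiMod (1 - ε) u)) 0 :=
    (continuousAt_betaPDF hhalf).comp_of_eq (continuousAt_const.sub hxi) (by rw [hxi']; norm_num)
  exact (continuousAt_const.mul (h₁.add h₂)).div_const _

lemma rescaledIntegrand_nonneg (hα : 0 < α) (hβ : 0 < β) (hαcs : 0 < αcs) (hε : 0 ≤ ε)
    (hu : u ∈ Icc 0 (1 - ε)) : 0 ≤ rescaledIntegrand α β αcs ε u := by
  have hξ := xiMod_one_sub_mem_Icc hε hu.2
  have h1ξ := Icc.mem_iff_one_sub_mem.1 hξ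
  have := betaPDF_nonneg hαcs (add_pos hα hβ) ⟨hu.1, by linarith [hu.2]⟩
  have := betaPDF_nonneg hα hβ hξ
  have := betaPDF_nonneg hα hβ h1ξ
  unfold rescaledIntegrand
  positivity

lemma rescaledIntegrand_zero_pos (hα : 0 < α) (hβ : 0 < β) (hαcs : 0 < αcs) (hu : u ∈ Ioo 0 1) :
    0 < rescaledIntegrand α β αcs 0 u := by
  have hhalf : (1 / 2 : ℝ) ∈ Ioo 0 1 := by norm_num
  have := betaPDF_pos hαcs (add_pos hα hβ) hu
  have := betaPDF_pos hα hβ hhalf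
  have := Real.sqrt_pos.2 (sub_pos.2 hu.2)
  rw [rescaledIntegrand, sub_zero, xiMod_one, show (1 : ℝ) - 1 / 2 = 1 / 2 by norm_num]
  positivity

lemma exists_norm_rescaledIntegrand_le (hα : 1 ≤ α) (hβ : 1 ≤ β) (hαcs : 1 ≤ αcs) :
    ∃ C, ∀ ε u, 0 ≤ ε → u ∈ Icc 0 (1 - ε) → ‖rescaledIntegrand α β αcs ε u‖ ≤ C := by
  set B₁ := Real.Gamma αcs * Real.Gamma (α + β) / Real.Gamma (αcs + (α + β))
  set B₂ := Real.Gamma α * Real.Gamma β / Real.Gamma (α + β)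
  have hB₁ : 0 < B₁ := Gamma_mul_Gamma_div_Gamma_add_pos (by linarith) (by linarith)
  have hB₂ : 0 < B₂ := Gamma_mul_Gamma_div_Gamma_add_pos (by linarith) (by linarith)
  refine ⟨(2 * B₁ * B₂)⁻¹, fun ε u hε hu => ?_⟩
  have hu₁ : u ∈ Icc 0 1 := ⟨hu.1, by linarith [hu.2]⟩
  have hξ := xiMod_one_sub_mem_Icc hε hu.2
  have h1ξ := Icc.mem_iff_one_sub_mem.1 hξ
  have : betaPDF αcs (α + β) u ≤ √(1 - u) / B₁ := betaPDF_le_sqrt_one_sub hαcs (by linarith) hu₁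
  have : betaPDF α β (xiMod (1 - ε) u) ≤ B₂⁻¹ := betaPDF_le hα hβ hξ
  have : betaPDF α β (1 - xiMod (1 - ε) u) ≤ B₂⁻¹ := betaPDF_le hα hβ h1ξ
  have : 0 ≤ betaPDF αcs (α + β) u := betaPDF_nonneg (by linarith) (by linarith) hu₁
  have : 0 ≤ betaPDF α β (xiMod (1 - ε) u) := betaPDF_nonneg (by linarith) (by linarith) hξ
  have : 0 ≤ betaPDF α β (1 - xiMod (1 - ε) u) := betaPDF_nonneg (by linarith) (by linarith) h1ξ
  have hnonneg : 0 ≤ rescaledIntegrand α β αcs ε u :=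
    rescaledIntegrand_nonneg (by linarith) (by linarith) (by linarith) hε hu
  calc ‖rescaledIntegrand α β αcs ε u‖
      = rescaledIntegrand α β αcs ε u := Real.norm_of_nonneg hnonneg
    _ ≤ √(1 - u) / B₁ * (B₂⁻¹ + B₂⁻¹) / (4 * √(1 - u)) := by unfold rescaledIntegrand; gcongr
    _ = √(1 - u) / √(1 - u) * (2 * B₁ * B₂)⁻¹ := by ring
    _ ≤ (2 * B₁ * B₂)⁻¹ := mul_le_of_le_one_left (by positivity) (div_self_le_one _)

lemma intervalIntegrable_rescaledIntegrand_zero (hα : 1 ≤ α) (hβ : 1 ≤ β) (hαcs : 1 ≤ αcs) :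
    IntervalIntegrable (rescaledIntegrand α β αcs 0) volume 0 1 := by
  obtain ⟨C, hC⟩ := exists_norm_rescaledIntegrand_le hα hβ hαcs
  refine (intervalIntegrable_const (c := C)).mono_fun'
    measurable_rescaledIntegrand.aestronglyMeasurable ?_
  rw [uIoc_of_le zero_le_one]
  refine (ae_restrict_iff' measurableSet_Ioc).2 (Eventually.of_forall fun u hu => ?_)
  exact hC 0 u le_rfl ⟨hu.1.le, by simpa using hu.2⟩

lemma tendsto_integral_rescaledIntegrand (hα : 1 ≤ α) (hβ : 1 ≤ β) (hαcs : 1 ≤ αcs) :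
    Tendsto (fun ε => ∫ u in 0..1 - ε, rescaledIntegrand α β αcs ε u) (𝓝[>] 0)
      (𝓝 (∫ u in 0..1, rescaledIntegrand α β αcs 0 u)) := by
  obtain ⟨C, hC⟩ := exists_norm_rescaledIntegrand_le hα hβ hαcs
  have hC₀ : 0 ≤ C := (norm_nonneg _).trans (hC 0 0 le_rfl (by norm_num))
  have hdomain : ∀ᶠ ε in 𝓝[>] (0 : ℝ), ∫ u in 0..1, (Iic (1 - ε)).indicator
      (rescaledIntegrand α β αcs ε) u = ∫ u in 0..1 - ε, rescaledIntegrand α β αcs ε u := by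
    filter_upwards [Ioo_mem_nhdsGT one_pos] with ε hε
    exact intervalIntegral.integral_indicator ⟨by linarith [hε.2], by linarith [hε.1]⟩
  refine (tendsto_integral_filter_of_dominated_convergence (fun _ => C) ?_ ?_
    intervalIntegrable_const ?_).congr' hdomain
  · exact Eventually.of_forall fun ε =>
      (measurable_rescaledIntegrand.indicator measurableSet_Iic).aestronglyMeasurable
  · filter_upwards [self_mem_nhdsWithin] with ε (hε : 0 < ε)
    refine Eventually.of_forall fun u hu => ?_
    rw [uIoc_of_le zero_le_one] at hu
    by_cases hu' : u ∈ Iic (1 - ε)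
    · rw [indicator_of_mem hu']
      exact hC ε u hε.le ⟨hu.1.le, hu'⟩
    · rwa [indicator_of_notMem hu', norm_zero]
  · filter_upwards [Measure.ae_ne volume 1] with u hu₁ hu
    rw [uIoc_of_le zero_le_one] at hu
    have hindicator : ∀ᶠ ε in 𝓝[>] (0 : ℝ), rescaledIntegrand α β αcs ε u =
        (Iic (1 - ε)).indicator (rescaledIntegrand α β αcs ε) u := by
      filter_upwards [Ioo_mem_nhdsGT (sub_pos.2 (lt_of_le_of_ne hu.2 hu₁))] with ε hε
      rw [indicator_of_mem (mem_Iic.2 (by linarith [hε.2]))]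
    exact (continuousAt_rescaledIntegrand_zero.tendsto.mono_left nhdsWithin_le_nhds).congr'
      hindicator

lemma integral_rescaledIntegrand_zero_pos (hα : 1 ≤ α) (hβ : 1 ≤ β) (hαcs : 1 ≤ αcs) :
    0 < ∫ u in 0..1, rescaledIntegrand α β αcs 0 u :=
  intervalIntegral.intervalIntegral_pos_of_pos_on
    (intervalIntegrable_rescaledIntegrand_zero hα hβ hαcs)
    (fun _ hu => rescaledIntegrand_zero_pos (by linarith) (by linarith) (by linarith) hu) one_pos

end RescaledIntegrand

lemma tendsto_atTop_of_tendsto_mul_sqrt {f : ℝ → ℝ} {K : ℝ} (hK : 0 < K)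
    (hf : Tendsto (fun ε => f ε * √ε) (𝓝[>] 0) (𝓝 K)) : Tendsto f (𝓝[>] 0) atTop := by
  have hsqrt : Tendsto (√·) (𝓝[>] (0 : ℝ)) (𝓝[>] 0) := by
    have := (Real.continuous_sqrt.continuousWithinAt (s := Ioi 0) (x := 0)).tendsto_nhdsWithin
      (t := Ioi 0) fun _ hx => Real.sqrt_pos.2 hx
    rwa [Real.sqrt_zero] at this
  refine (hf.pos_mul_atTop hK hsqrt.inv_tendsto_nhdsGT_zero).congr' ?_
  filter_upwards [self_mem_nhdsWithin] with ε (hε : 0 < ε)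
  simp [(Real.sqrt_pos.2 hε).ne']

lemma tendsto_one_sub_nhdsLT_one : Tendsto (fun a : ℝ => 1 - a) (𝓝[<] 1) (𝓝[>] 0) := by
  have hcont : ContinuousWithinAt (fun a : ℝ => 1 - a) (Iio 1) 1 := by fun_prop
  simpa using hcont.tendsto_nhdsWithin (t := Ioi 0) fun _ ha => sub_pos.2 ha

/-- For parameters `α, β, α_cs ≥ 1`, the posterior density of the modified ambiguity
satisfies `P̃(1-ε) ∼ K·ε^{-1/2}` as `ε → 0⁺` for some constant `K > 0` (i.e.
`P̃(1-ε)·√ε → K`); in particular `P̃(a) → +∞` as `a → 1⁻`. -/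
theorem ambModPosterior_diverges_at_one
    (α β αcs : ℝ) (hα : 1 ≤ α) (hβ : 1 ≤ β) (hαcs : 1 ≤ αcs) :
    (∃ K : ℝ, 0 < K ∧
        Tendsto (fun ε : ℝ => ambModPosterior α β αcs (1 - ε) * Real.sqrt ε)
          (𝓝[>] (0 : ℝ)) (𝓝 K))
    ∧ Tendsto (ambModPosterior α β αcs) (𝓝[<] (1 : ℝ)) atTop := by
  have hK := integral_rescaledIntegrand_zero_pos hα hβ hαcs
  have hlim : Tendsto (fun ε => ambModPosterior α β αcs (1 - ε) * √ε) (𝓝[>] 0)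
      (𝓝 (∫ u in 0..1, rescaledIntegrand α β αcs 0 u)) := by
    refine (tendsto_integral_rescaledIntegrand hα hβ hαcs).congr' ?_
    filter_upwards [self_mem_nhdsWithin] with ε (hε : 0 < ε)
    exact (ambModPosterior_one_sub_mul_sqrt hε).symm
  refine ⟨⟨_, hK, hlim⟩, ?_⟩
  simpa [Function.comp_def] using
    (tendsto_atTop_of_tendsto_mul_sqrt hK hlim).comp tendsto_one_sub_nhdsLT_one
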